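/- Let v be a stem in a forest T, let R be the set of leaf neighbors of v, and let r = |R| ≥ 1. If r+1 is not a triangular number, then s̊(T) = s̊(T − R − v) + s̊(K_{1,r}). -/

import Mathlib

variable {V : Type} [Fintype V] [DecidableEq V]

/-- The `k`-th triangular number `t_k = C(k+1,2)`. -/
def tri (k : ℕ) : ℕ := (k + 1).choose 2

/-- A natural number is triangular if it equals `t_k` for some `k`. -/
def IsTriangular (m : ℕ) : Prop := ∃ k, m = tri k

/-- `uval r = max {k : t_k ≤ r}`. -/
def uval (r : ℕ) : ℕ := Nat.findGreatest (fun k => tri k ≤ r) r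

open Classical in
/-- Sum-color cost (optimal total score of the slow-coloring game) of the subgraph
of `G` induced by `S`: it is `0` when there are no vertices, and otherwise the maximum
over nonempty marked sets `M ⊆ S` of `|M|` plus the minimum over nonempty independent
subsets `I ⊆ M` of the sum-color cost of the graph with `I` deleted. -/
noncomputable def scost (G : SimpleGraph V) (S : Finset V) : ℕ :=
  if S = ∅ then 0
  else
    (S.powerset.erase ∅).attach.sup fun M =>
      M.1.card +
      WithBot.unbotD 0
        ((((M.1.powerset.erase ∅).filter
              fun I => ∀ x ∈ I, ∀ y ∈ I, ¬ G.Adj x y).attach.image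
            fun I => scost G (S \ I.1)).min)
termination_by S.card
decreasing_by
  · have hI := I.2
    have hM := M.2
    simp only [Finset.mem_filter, Finset.mem_erase, Finset.mem_powerset] at hI hM
    have hsub : I.1 ⊆ S := hI.1.2.trans hM.2
    have hne : I.1.Nonempty := Finset.nonempty_iff_ne_empty.mpr hI.1.1
    exact Finset.card_lt_card (Finset.sdiff_ssubset hsub hne)

/-- A vertex is a leaf if it has exactly one neighbor. -/
def IsLeaf (G : SimpleGraph V) (v : V) : Prop := (G.neighborSet v).ncard = 1

/-- A stem in a forest: a vertex with at least one leaf neighbor and at most one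
non-leaf neighbor. -/
def IsStem (G : SimpleGraph V) (v : V) : Prop :=
  (∃ w, G.Adj v w ∧ IsLeaf G w) ∧ {w | G.Adj v w ∧ ¬ IsLeaf G w}.ncard ≤ 1

/-- The star `K_{1,r}` with one center (the vertex `0`) and `r` leaves. -/
def starGraph (r : ℕ) : SimpleGraph (Fin (r + 1)) :=
  SimpleGraph.fromRel (fun x _ => x = 0)

/-!
Lister's side: `s̊` is superadditive over disjoint vertex sets (Lister first plays optimally
on one part), and on the star `R ∪ {v}` Lister marks the centre together with `uval r` leaves,
which forces `r + uval r + 1` points (`uval r + 1` is the largest `k` with `C(k,2) ≤ r`).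

Painter's side: answer a mark `M` by combining an optimal answer on `T - R - v` to the part of
`M` outside the star with either the marked leaves or the stem `v`. Each round then lowers
`s̊(S \ (R ∪ {v})) + ℓ + [v uncolored] (uval (ℓ + o) + 1)` by at least `|M|`, where `ℓ` counts
the uncolored leaves of `R` and `o ≤ 1` the uncolored non-leaf neighbours of `v`. Since `r + 1`
is not triangular, `uval (r + 1) = uval r`, so the non-leaf neighbour costs nothing initially.
-/

open Classical in
noncomputable def painterMoves (G : SimpleGraph V) (M : Finset V) : Finset (Finset V) :=
  (M.powerset.erase ∅).filter fun I => ∀ x ∈ I, ∀ y ∈ I, ¬ G.Adj x y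

noncomputable def markValue (G : SimpleGraph V) (S M : Finset V) : ℕ :=
  M.card + WithBot.unbotD 0 ((painterMoves G M).image fun I => scost G (S \ I)).min

section SlowColoring

variable {G : SimpleGraph V} {S M I : Finset V}

lemma mem_painterMoves :
    I ∈ painterMoves G M ↔ I ⊆ M ∧ I.Nonempty ∧ G.IsIndepSet (I : Set V) := by
  simp only [painterMoves, Finset.mem_filter, Finset.mem_erase, Finset.mem_powerset,
    Finset.nonempty_iff_ne_empty, SimpleGraph.isIndepSet_iff, Set.Pairwise, Finset.mem_coe]
  exact ⟨fun ⟨⟨hne, hsub⟩, h⟩ => ⟨hsub, hne, fun x hx y hy _ => h x hx y hy⟩,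
    fun ⟨hsub, hne, h⟩ => ⟨⟨hne, hsub⟩, fun x hx y hy hxy =>
      (h hx hy (G.ne_of_adj hxy)) hxy⟩⟩

lemma singleton_mem_painterMoves {x : V} (hx : x ∈ M) : {x} ∈ painterMoves G M :=
  mem_painterMoves.2 ⟨Finset.singleton_subset_iff.2 hx, Finset.singleton_nonempty x,
    by simp⟩

@[simp] lemma scost_empty (G : SimpleGraph V) : scost G ∅ = 0 := by
  rw [scost, if_pos rfl]

lemma scost_eq_sup (hS : S.Nonempty) :
    scost G S = (S.powerset.erase ∅).sup (markValue G S) := by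
  rw [scost, if_neg hS.ne_empty, ← Finset.sup_attach _ (markValue G S)]
  refine Finset.sup_congr rfl fun M _ => ?_
  unfold markValue painterMoves
  congr 3
  exact (Finset.image_image (g := fun I => scost G (S \ I))).symm.trans
    (congrArg _ Finset.attach_image_val)

-- `scost` reads the `WithTop`-valued `Finset.min` through `WithBot.unbotD`; both are `Option ℕ`.
lemma unbotD_min_eq {s : Finset ℕ} (hs : s.Nonempty) : WithBot.unbotD 0 s.min = s.min' hs := by
  rw [← Finset.coe_min' hs]
  rfl

lemma markValue_le (hI : I ∈ painterMoves G M) :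
    markValue G S M ≤ M.card + scost G (S \ I) := by
  have hne : ((painterMoves G M).image fun I => scost G (S \ I)).Nonempty :=
    ⟨_, Finset.mem_image_of_mem _ hI⟩
  rw [markValue, unbotD_min_eq hne]
  exact Nat.add_le_add_left (Finset.min'_le _ _ (Finset.mem_image_of_mem _ hI)) _

lemma exists_markValue_eq (hM : M.Nonempty) :
    ∃ I ∈ painterMoves G M, markValue G S M = M.card + scost G (S \ I) := by
  obtain ⟨x, hx⟩ := hM
  have hne : ((painterMoves G M).image fun I => scost G (S \ I)).Nonempty :=
    ⟨_, Finset.mem_image_of_mem _ (singleton_mem_painterMoves hx)⟩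
  obtain ⟨I, hI, hmin⟩ := Finset.mem_image.1 (Finset.min'_mem _ hne)
  refine ⟨I, hI, ?_⟩
  rw [markValue, unbotD_min_eq hne, hmin]

lemma exists_mem_painterMoves_add_scost_le (hMS : M ⊆ S) (hM : M.Nonempty) :
    ∃ I ∈ painterMoves G M, M.card + scost G (S \ I) ≤ scost G S := by
  obtain ⟨I, hI, hval⟩ := exists_markValue_eq (S := S) (G := G) hM
  refine ⟨I, hI, hval ▸ ?_⟩
  rw [scost_eq_sup (hM.mono hMS)]
  exact Finset.le_sup (Finset.mem_erase.2 ⟨hM.ne_empty, Finset.mem_powerset.2 hMS⟩)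

lemma scost_le_of_forall_exists {c : ℕ}
    (h : ∀ M ⊆ S, M.Nonempty → ∃ I ∈ painterMoves G M, M.card + scost G (S \ I) ≤ c) :
    scost G S ≤ c := by
  rcases S.eq_empty_or_nonempty with rfl | hS
  · simp
  rw [scost_eq_sup hS]
  refine Finset.sup_le fun M hM => ?_
  obtain ⟨hne, hMS⟩ := Finset.mem_erase.1 hM
  obtain ⟨I, hI, hle⟩ := h M (Finset.mem_powerset.1 hMS) (Finset.nonempty_iff_ne_empty.2 hne)
  exact (markValue_le hI).trans hle

lemma exists_optimal_mark (hS : S.Nonempty) :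
    ∃ M ⊆ S, M.Nonempty ∧ ∀ I ∈ painterMoves G M, scost G S ≤ M.card + scost G (S \ I) := by
  obtain ⟨M, hM, hsup⟩ := Finset.exists_mem_eq_sup _
    ⟨S, Finset.mem_erase.2 ⟨hS.ne_empty, Finset.mem_powerset_self S⟩⟩ (markValue G S)
  obtain ⟨hne, hMS⟩ := Finset.mem_erase.1 hM
  refine ⟨M, Finset.mem_powerset.1 hMS, Finset.nonempty_iff_ne_empty.2 hne, fun I hI => ?_⟩
  rw [scost_eq_sup hS, hsup]
  exact markValue_le hI

end SlowColoring

section SlowColoringBounds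

variable {G : SimpleGraph V}

lemma scost_le_of_potential (Φ : Finset V → ℕ)
    (hstep : ∀ S M, M ⊆ S → M.Nonempty → ∃ I ∈ painterMoves G M, M.card + Φ (S \ I) ≤ Φ S)
    (S : Finset V) : scost G S ≤ Φ S := by
  induction S using Finset.strongInduction with
  | H S ih =>
    refine scost_le_of_forall_exists fun M hMS hM => ?_
    obtain ⟨I, hI, hle⟩ := hstep S M hMS hM
    obtain ⟨hIM, hIne, -⟩ := mem_painterMoves.1 hI
    have := ih (S \ I) (Finset.sdiff_ssubset (hIM.trans hMS) hIne)
    exact ⟨I, hI, by omega⟩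

lemma exists_response {A N : Finset V} (hNA : N ⊆ A) :
    ∃ Q ⊆ N, G.IsIndepSet (Q : Set V) ∧ N.card + scost G (A \ Q) ≤ scost G A ∧
      (N.Nonempty → Q.Nonempty) := by
  rcases N.eq_empty_or_nonempty with rfl | hN
  · exact ⟨∅, le_rfl, by simp, by simp, id⟩
  obtain ⟨Q, hQ, hle⟩ := exists_mem_painterMoves_add_scost_le (G := G) hNA hN
  obtain ⟨hQN, hQne, hQind⟩ := mem_painterMoves.1 hQ
  exact ⟨Q, hQN, hQind, hle, fun _ => hQne⟩

lemma scost_add_scost_le_scost_union {A B : Finset V} (hAB : Disjoint A B) :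
    scost G A + scost G B ≤ scost G (A ∪ B) := by
  induction A using Finset.strongInduction with
  | H A ih =>
    rcases A.eq_empty_or_nonempty with rfl | hA
    · simp
    obtain ⟨M, hMA, hM, hopt⟩ := exists_optimal_mark (G := G) hA
    obtain ⟨I, hI, hle⟩ := exists_mem_painterMoves_add_scost_le (G := G)
      (hMA.trans Finset.subset_union_left) (S := A ∪ B) hM
    obtain ⟨hIM, hIne, -⟩ := mem_painterMoves.1 hI
    have hIA := hIM.trans hMA
    have hrest := ih (A \ I) (Finset.sdiff_ssubset hIA hIne)
      (Finset.disjoint_of_subset_left Finset.sdiff_subset hAB)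
    rw [Finset.union_sdiff_distrib, (hAB.symm.mono_right hIA).sdiff_eq_left] at hle
    have := hopt I hI
    omega

lemma card_le_scost_of_isIndepSet {S : Finset V} (hS : G.IsIndepSet (S : Set V)) :
    S.card ≤ scost G S := by
  rcases S.eq_empty_or_nonempty with rfl | hne
  · simp
  obtain ⟨I, -, hle⟩ := exists_mem_painterMoves_add_scost_le (G := G) le_rfl hne
  omega

end SlowColoringBounds

section Triangular

lemma tri_succ (k : ℕ) : tri (k + 1) = tri k + (k + 1) := by
  rw [tri, tri, Nat.choose_succ_succ, Nat.choose_one_right, add_comm]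

lemma tri_strictMono : StrictMono tri :=
  strictMono_nat_of_lt_succ fun k => by rw [tri_succ]; omega

lemma le_tri_self (k : ℕ) : k ≤ tri k := by
  induction k with
  | zero => exact le_rfl
  | succ k ih => rw [tri_succ]; omega

lemma tri_uval_le (l : ℕ) : tri (uval l) ≤ l :=
  Nat.findGreatest_spec (P := fun k => tri k ≤ l) (Nat.zero_le l) (Nat.zero_le l)

lemma le_uval_of_tri_le {k l : ℕ} (h : tri k ≤ l) : k ≤ uval l :=
  Nat.le_findGreatest ((le_tri_self k).trans h) h

lemma uval_lt_of_lt_tri {k l : ℕ} (h : l < tri k) : uval l < k := by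
  by_contra! hk
  exact absurd ((tri_strictMono.monotone hk).trans (tri_uval_le l)) (not_le.2 h)

lemma lt_tri_uval_succ (l : ℕ) : l < tri (uval l + 1) := by
  by_contra! h
  exact absurd (le_uval_of_tri_le h) (Nat.not_succ_le_self _)

lemma uval_mono : Monotone uval := fun _ _ h => le_uval_of_tri_le ((tri_uval_le _).trans h)

lemma uval_sub_lt {l m : ℕ} (h : uval l < m) (hm : m ≤ l) : uval (l - m) < uval l := by
  refine uval_lt_of_lt_tri ?_
  have := lt_tri_uval_succ l
  rw [tri_succ] at this
  omega

lemma le_uval_sub_add_one {j l : ℕ} (h : j ≤ uval l) : j ≤ uval (l - j) + 1 := by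
  obtain _ | i := j
  · exact Nat.zero_le _
  have hi := (tri_strictMono.monotone h).trans (tri_uval_le l)
  rw [tri_succ] at hi
  exact Nat.succ_le_succ (le_uval_of_tri_le (by omega))

lemma uval_succ_of_not_isTriangular {l : ℕ} (h : ¬ IsTriangular (l + 1)) :
    uval (l + 1) = uval l := by
  have hlt := lt_tri_uval_succ l
  have hne : l + 1 ≠ tri (uval l + 1) := fun he => h ⟨_, he⟩
  have := uval_lt_of_lt_tri (show l + 1 < tri (uval l + 1) by omega)
  exact le_antisymm (by omega) (uval_mono l.le_succ)

end Triangular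

lemma card_add_uval_add_one_le_scost_insert {G : SimpleGraph V} {c : V} {L : Finset V} (hc : c ∉ L)
    (hadj : ∀ x ∈ L, G.Adj c x) (hL : G.IsIndepSet (L : Set V)) :
    L.card + uval L.card + 1 ≤ scost G (insert c L) := by
  induction L using Finset.strongInduction with
  | H L ih =>
    have huval : uval L.card ≤ L.card := Nat.findGreatest_le _
    obtain ⟨X, hXL, hX⟩ := Finset.exists_subset_card_eq huval
    obtain ⟨I, hI, hle⟩ := exists_mem_painterMoves_add_scost_le (G := G)
      (Finset.insert_subset_insert c hXL) (Finset.insert_nonempty c X)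
    obtain ⟨hIX, hIne, hIind⟩ := mem_painterMoves.1 hI
    rw [Finset.card_insert_of_notMem (fun h => hc (hXL h))] at hle
    by_cases hcI : c ∈ I
    · have hIc : I = {c} := by
        refine Finset.eq_singleton_iff_unique_mem.2 ⟨hcI, fun x hx => ?_⟩
        by_contra hxc
        have hxL := hXL ((Finset.mem_insert.1 (hIX hx)).resolve_left hxc)
        exact hIind hcI hx (Ne.symm hxc) (hadj x hxL)
      rw [hIc, Finset.sdiff_singleton_eq_erase, Finset.erase_insert hc] at hle
      have := card_le_scost_of_isIndepSet hL
      omega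
    · have hIX' : I ⊆ X := fun x hx => (Finset.mem_insert.1 (hIX hx)).resolve_left
        (fun h => hcI (h ▸ hx))
      have hIL := hIX'.trans hXL
      rw [Finset.insert_sdiff_of_notMem _ hcI] at hle
      have hrest := ih (L \ I) (Finset.sdiff_ssubset hIL hIne)
        (fun h => hc (Finset.sdiff_subset h)) (fun x hx => hadj x (Finset.sdiff_subset hx))
        (hL.mono (by simp))
      rw [Finset.card_sdiff_of_subset hIL] at hrest
      have hj := le_uval_sub_add_one ((Finset.card_le_card hIX').trans hX.le)
      have := hIne.card_pos
      omega

lemma neighborSet_eq_singleton_of_isLeaf {α : Type} {G : SimpleGraph α} {v w : α}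
    (hw : IsLeaf G w) (hadj : G.Adj w v) : G.neighborSet w = {v} := by
  obtain ⟨a, ha⟩ := Set.ncard_eq_one.1 hw
  have hv : v ∈ G.neighborSet w := hadj
  rw [ha, Set.mem_singleton_iff] at hv
  rw [ha, hv]

section Stem

variable {α : Type*} {G : SimpleGraph α} {v : α} {R : Finset α}

lemma notMem_of_forall_neighborSet_eq (hleaf : ∀ w ∈ R, G.neighborSet w = {v}) : v ∉ R :=
  fun hv => G.irrefl (show v ∈ G.neighborSet v from (hleaf v hv).symm ▸ rfl)

lemma isIndepSet_insert_of_forall_not_adj {Q : Set α} (hQ : G.IsIndepSet Q)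
    (hv : ∀ y ∈ Q, ¬ G.Adj v y) : G.IsIndepSet (insert v Q) :=
  hQ.insert fun y hy _ => ⟨hv y hy, fun h => hv y hy h.symm⟩

variable [DecidableEq α]

lemma isIndepSet_union_of_subset (hleaf : ∀ w ∈ R, G.neighborSet w = {v}) {K Q : Finset α}
    (hK : K ⊆ R) (hvQ : v ∉ Q) (hQ : G.IsIndepSet (Q : Set α)) :
    G.IsIndepSet ((K ∪ Q : Finset α) : Set α) := by
  have hvR := notMem_of_forall_neighborSet_eq hleaf
  have hKnbr : ∀ x ∈ K, ∀ y ∈ K ∪ Q, ¬ G.Adj x y := fun x hx y hy hxy => by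
    have hyv : y = v := (hleaf x (hK hx)).subset hxy
    subst hyv
    rcases Finset.mem_union.1 hy with h | h
    exacts [hvR (hK h), hvQ h]
  intro x hx y hy hxy
  simp only [Finset.coe_union, Set.mem_union, Finset.mem_coe] at hx hy
  rcases hx with hx | hx
  · exact hKnbr x hx y (by simp [hy])
  rcases hy with hy | hy
  · exact fun h => hKnbr y hy x (by simp [hx]) h.symm
  · exact hQ hx hy hxy

open Classical in
noncomputable def outerNbrs (G : SimpleGraph α) (v : α) (R S : Finset α) : Finset α :=
  (S \ insert v R).filter (G.Adj v)

/-- While `v` and `l` leaves of `R` are uncolored, the star part is worth `l + uval l + 1`;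
an uncolored neighbour of `v` outside the star counts as one more leaf. -/
noncomputable def stemPotential (G : SimpleGraph α) (v : α) (R S : Finset α) : ℕ :=
  (S ∩ R).card + if v ∈ S then uval ((S ∩ R).card + (outerNbrs G v R S).card) + 1 else 0

lemma mem_outerNbrs {S : Finset α} {x : α} :
    x ∈ outerNbrs G v R S ↔ x ∈ S \ insert v R ∧ G.Adj v x := by
  simp [outerNbrs]

lemma card_outerNbrs_le_one (hout : {x | G.Adj v x ∧ x ∉ R}.Subsingleton) (S : Finset α) :
    (outerNbrs G v R S).card ≤ 1 := by
  refine Finset.card_le_one.2 fun x hx y hy => hout ?_ ?_ <;>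
    simp_all [mem_outerNbrs]

lemma outerNbrs_sdiff (S I : Finset α) :
    outerNbrs G v R (S \ I) = outerNbrs G v R S \ I := by
  ext x
  simp only [mem_outerNbrs, Finset.mem_sdiff]
  tauto

lemma card_eq_card_inter_add_card_sdiff_insert (hvR : v ∉ R) (M : Finset α) :
    M.card = (M ∩ R).card + (M \ insert v R).card + if v ∈ M then 1 else 0 := by
  rw [← Finset.card_inter_add_card_sdiff M (insert v R)]
  split_ifs with hvM
  · rw [Finset.inter_insert_of_mem hvM, Finset.card_insert_of_notMem (by simp [hvR])]
    omega
  · rw [Finset.inter_insert_of_notMem hvM, add_zero]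

lemma stemPotential_sdiff_insert (hvR : v ∉ R) {S Q : Finset α} (hQ : Q ⊆ S \ insert v R) :
    stemPotential G v R (S \ insert v Q) = (S ∩ R).card := by
  have hR : (S \ insert v Q) ∩ R = S ∩ R := by
    ext x
    have := @hQ x
    simp only [Finset.mem_inter, Finset.mem_sdiff, Finset.mem_insert] at this ⊢
    constructor
    · tauto
    · rintro ⟨hxS, hxR⟩
      exact ⟨⟨hxS, by rintro (rfl | hxQ) <;> [exact hvR hxR; exact (this hxQ).2 (.inr hxR)]⟩, hxR⟩
  simp [stemPotential, hR]

lemma stemPotential_sdiff_union (hvR : v ∉ R) {S K Q : Finset α} (hK : K ⊆ R)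
    (hQ : Q ⊆ S \ insert v R) :
    stemPotential G v R (S \ (K ∪ Q)) = ((S ∩ R) \ K).card +
      if v ∈ S then uval (((S ∩ R) \ K).card + (outerNbrs G v R S \ Q).card) + 1 else 0 := by
  have hR : (S \ (K ∪ Q)) ∩ R = (S ∩ R) \ K := by
    ext x
    have := @hQ x
    simp only [Finset.mem_inter, Finset.mem_sdiff, Finset.mem_union, Finset.mem_insert] at this ⊢
    tauto
  have hv : v ∈ S \ (K ∪ Q) ↔ v ∈ S := by
    have := @hQ v
    simp only [Finset.mem_sdiff, Finset.mem_union, Finset.mem_insert] at this ⊢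
    exact ⟨And.left, fun h => ⟨h, by rintro (hvK | hvQ) <;> [exact hvR (hK hvK); simp_all]⟩⟩
  have hout : outerNbrs G v R S \ (K ∪ Q) = outerNbrs G v R S \ Q := by
    ext x
    have := @hK x
    simp only [mem_outerNbrs, Finset.mem_sdiff, Finset.mem_union, Finset.mem_insert] at this ⊢
    tauto
  simp only [stemPotential, hR, hv, outerNbrs_sdiff, hout]

end Stem

section StemStrategy

variable {G : SimpleGraph V} {v : V} {R : Finset V}

noncomputable def stemBound (G : SimpleGraph V) (v : V) (R S : Finset V) : ℕ :=
  scost G (S \ insert v R) + stemPotential G v R S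

lemma exists_move_of_response {S M P Q : Finset V} {c : ℕ} (hPW : P ⊆ insert v R)
    (hQ : Q ⊆ S \ insert v R) (hmove : P ∪ Q ∈ painterMoves G M)
    (hresp : c + scost G ((S \ insert v R) \ Q) ≤ scost G (S \ insert v R))
    (harith : M.card + stemPotential G v R (S \ (P ∪ Q)) ≤ c + stemPotential G v R S) :
    ∃ I ∈ painterMoves G M, M.card + stemBound G v R (S \ I) ≤ stemBound G v R S := by
  refine ⟨P ∪ Q, hmove, ?_⟩
  have hrest : (S \ (P ∪ Q)) \ insert v R = (S \ insert v R) \ Q := by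
    ext x
    have := @hPW x
    have := @hQ x
    simp only [Finset.mem_sdiff, Finset.mem_union] at *
    tauto
  rw [stemBound, stemBound, hrest]
  omega

lemma exists_leaf_move (hleaf : ∀ w ∈ R, G.neighborSet w = {v}) {S M Q : Finset V}
    (hMS : M ⊆ S) (hQ : Q ⊆ M \ insert v R) (hQind : G.IsIndepSet (Q : Set V))
    (hresp : (M \ insert v R).card + scost G ((S \ insert v R) \ Q) ≤ scost G (S \ insert v R))
    (hne : (M ∩ R ∪ Q).Nonempty)
    (harith : v ∈ S → (if v ∈ M then 1 else 0) +
      uval ((S ∩ R).card - (M ∩ R).card + (outerNbrs G v R S \ Q).card) ≤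
        uval ((S ∩ R).card + (outerNbrs G v R S).card)) :
    ∃ I ∈ painterMoves G M, M.card + stemBound G v R (S \ I) ≤ stemBound G v R S := by
  have hvR := notMem_of_forall_neighborSet_eq hleaf
  have hQS : Q ⊆ S \ insert v R := hQ.trans (Finset.sdiff_subset_sdiff hMS le_rfl)
  have hKS : M ∩ R ⊆ S ∩ R := Finset.inter_subset_inter_right hMS
  have hvQ : v ∉ Q := fun h => (Finset.mem_sdiff.1 (hQ h)).2 (Finset.mem_insert_self v R)
  refine exists_move_of_response (Finset.inter_subset_right.trans (Finset.subset_insert v R))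
    hQS (mem_painterMoves.2 ⟨Finset.union_subset Finset.inter_subset_left
      (hQ.trans Finset.sdiff_subset), hne,
      isIndepSet_union_of_subset hleaf Finset.inter_subset_right hvQ hQind⟩) hresp ?_
  rw [stemPotential_sdiff_union hvR Finset.inter_subset_right hQS,
    card_eq_card_inter_add_card_sdiff_insert hvR M,
    Finset.card_sdiff_of_subset hKS, stemPotential]
  have := Finset.card_le_card hKS
  by_cases hvS : v ∈ S
  · have := harith hvS
    simp only [if_pos hvS]
    split_ifs at this ⊢ <;> omega
  · simp only [if_neg hvS, if_neg (fun h => hvS (hMS h))]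
    omega

lemma exists_center_move (hvR : v ∉ R) {S M Q : Finset V} {c : ℕ} (hMS : M ⊆ S) (hvM : v ∈ M)
    (hQ : Q ⊆ M \ insert v R) (hQind : G.IsIndepSet (Q : Set V)) (hQv : ∀ y ∈ Q, ¬ G.Adj v y)
    (hresp : c + scost G ((S \ insert v R) \ Q) ≤ scost G (S \ insert v R))
    (harith : M.card ≤ c + uval ((S ∩ R).card + (outerNbrs G v R S).card) + 1) :
    ∃ I ∈ painterMoves G M, M.card + stemBound G v R (S \ I) ≤ stemBound G v R S := by
  have hQS : Q ⊆ S \ insert v R := hQ.trans (Finset.sdiff_subset_sdiff hMS le_rfl)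
  have hmove : {v} ∪ Q ∈ painterMoves G M := by
    refine mem_painterMoves.2 ⟨Finset.union_subset (by simpa using hvM)
      (hQ.trans Finset.sdiff_subset), by simp, ?_⟩
    rw [Finset.coe_union, Finset.coe_singleton, Set.singleton_union]
    exact isIndepSet_insert_of_forall_not_adj hQind hQv
  refine exists_move_of_response (by simp) hQS hmove hresp ?_
  rw [← Finset.insert_eq, stemPotential_sdiff_insert hvR hQS, stemPotential, if_pos (hMS hvM)]
  omega

open Classical in
lemma exists_stem_move_of_adj_mem (hleaf : ∀ w ∈ R, G.neighborSet w = {v})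
    (hout : {x | G.Adj v x ∧ x ∉ R}.Subsingleton) {S M Q : Finset V} {u : V} (hMS : M ⊆ S)
    (hvM : v ∈ M) (hQM : Q ⊆ M \ insert v R) (hQind : G.IsIndepSet (Q : Set V))
    (hQresp : (M \ insert v R).card + scost G ((S \ insert v R) \ Q) ≤ scost G (S \ insert v R))
    (huQ : u ∈ Q) (hvu : G.Adj v u) :
    ∃ I ∈ painterMoves G M, M.card + stemBound G v R (S \ I) ≤ stemBound G v R S := by
  have hvR := notMem_of_forall_neighborSet_eq hleaf
  have hM'S : M \ insert v R ⊆ S \ insert v R := Finset.sdiff_subset_sdiff hMS le_rfl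
  have hm := Finset.card_le_card (Finset.inter_subset_inter_right hMS : M ∩ R ⊆ S ∩ R)
  have ho := card_outerNbrs_le_one hout S
  have hcard := card_eq_card_inter_add_card_sdiff_insert hvR M
  have huo : u ∈ outerNbrs G v R S := mem_outerNbrs.2 ⟨hM'S (hQM huQ), hvu⟩
  have hsingle : outerNbrs G v R S = {u} :=
    Finset.eq_singleton_iff_unique_mem.2 ⟨huo, fun x hx => Finset.card_le_one.1 ho x hx u huo⟩
  by_cases h : (M ∩ R).card + 1 ≤ uval ((S ∩ R).card + 1)
  · -- Coloring `v` forbids coloring `u`, so answer the outside part of `M` without `u`.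
    obtain ⟨Q₂, hQ₂, hQ₂ind, hQ₂resp, -⟩ := exists_response (G := G)
      ((Finset.filter_subset (fun y => ¬ G.Adj v y) _).trans hM'S)
    refine exists_center_move hvR hMS hvM (hQ₂.trans (Finset.filter_subset _ _)) hQ₂ind
      (fun y hy => (Finset.mem_filter.1 (hQ₂ hy)).2) hQ₂resp ?_
    have hadj : ((M \ insert v R).filter (G.Adj v)).card ≤ 1 :=
      (Finset.card_le_card (Finset.filter_subset_filter _ hM'S)).trans ho
    have := Finset.card_filter_add_card_filter_not (s := M \ insert v R) (G.Adj v)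
    rw [hsingle, Finset.card_singleton, if_pos hvM] at *
    omega
  · refine exists_leaf_move hleaf hMS hQM hQind hQresp ⟨u, by simp [huQ]⟩ fun _ => ?_
    rw [hsingle, Finset.sdiff_eq_empty_iff_subset.2 (by simpa using huQ), if_pos hvM,
      Finset.card_empty, add_zero, Finset.card_singleton]
    have := uval_sub_lt (l := (S ∩ R).card + 1) (m := (M ∩ R).card + 1) (by omega) (by omega)
    rw [Nat.add_sub_add_right] at this
    omega

lemma exists_stem_move_of_mem (hleaf : ∀ w ∈ R, G.neighborSet w = {v})
    (hout : {x | G.Adj v x ∧ x ∉ R}.Subsingleton) {S M : Finset V} (hMS : M ⊆ S) (hvM : v ∈ M) :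
    ∃ I ∈ painterMoves G M, M.card + stemBound G v R (S \ I) ≤ stemBound G v R S := by
  have hvR := notMem_of_forall_neighborSet_eq hleaf
  obtain ⟨Q, hQM, hQind, hQresp, -⟩ :=
    exists_response (G := G) (Finset.sdiff_subset_sdiff hMS le_rfl : M \ insert v R ⊆ _)
  by_cases hu : ∃ u ∈ Q, G.Adj v u
  · obtain ⟨u, huQ, hvu⟩ := hu
    exact exists_stem_move_of_adj_mem hleaf hout hMS hvM hQM hQind hQresp huQ hvu
  push Not at hu
  have hm := Finset.card_le_card (Finset.inter_subset_inter_right hMS : M ∩ R ⊆ S ∩ R)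
  have hcard := card_eq_card_inter_add_card_sdiff_insert hvR M
  rw [if_pos hvM] at hcard
  by_cases h : (M ∩ R).card ≤ uval ((S ∩ R).card + (outerNbrs G v R S).card)
  · exact exists_center_move hvR hMS hvM hQM hQind hu hQresp (by omega)
  have hK : (M ∩ R).Nonempty := Finset.card_pos.1 (by omega)
  refine exists_leaf_move hleaf hMS hQM hQind hQresp (hK.mono Finset.subset_union_left)
    fun _ => ?_
  have hdisj : outerNbrs G v R S \ Q = outerNbrs G v R S :=
    Finset.sdiff_eq_self_of_disjoint (Finset.disjoint_left.2 fun x hx hxQ =>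
      hu x hxQ (mem_outerNbrs.1 hx).2)
  rw [hdisj, if_pos hvM]
  have := uval_sub_lt (not_le.1 h) (by omega)
  rw [Nat.sub_add_comm hm] at this
  omega

lemma exists_stem_move (hleaf : ∀ w ∈ R, G.neighborSet w = {v})
    (hout : {x | G.Adj v x ∧ x ∉ R}.Subsingleton) {S M : Finset V} (hMS : M ⊆ S)
    (hM : M.Nonempty) :
    ∃ I ∈ painterMoves G M, M.card + stemBound G v R (S \ I) ≤ stemBound G v R S := by
  by_cases hvM : v ∈ M
  · exact exists_stem_move_of_mem hleaf hout hMS hvM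
  have hM'S : M \ insert v R ⊆ S \ insert v R := Finset.sdiff_subset_sdiff hMS le_rfl
  obtain ⟨Q, hQM, hQind, hQresp, hQne⟩ := exists_response (G := G) hM'S
  refine exists_leaf_move hleaf hMS hQM hQind hQresp ?_ fun _ => ?_
  · obtain ⟨x, hx⟩ := hM
    by_cases hxR : x ∈ R
    · exact ⟨x, by simp [hx, hxR]⟩
    · have hxv : x ≠ v := fun h => hvM (h ▸ hx)
      have hx' : x ∈ M \ insert v R := by simp [hx, hxR, hxv]
      exact (hQne ⟨x, hx'⟩).mono Finset.subset_union_right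
  · rw [if_neg hvM, zero_add]
    have := Finset.card_le_card (Finset.sdiff_subset (s := outerNbrs G v R S) (t := Q))
    exact uval_mono (by omega)

theorem scost_le_stemBound (hleaf : ∀ w ∈ R, G.neighborSet w = {v})
    (hout : {x | G.Adj v x ∧ x ∉ R}.Subsingleton) (S : Finset V) :
    scost G S ≤ stemBound G v R S :=
  scost_le_of_potential _ (fun _ _ hMS hM => exists_stem_move hleaf hout hMS hM) S

end StemStrategy

lemma starGraph_adj {r : ℕ} {x y : Fin (r + 1)} :
    (starGraph r).Adj x y ↔ x ≠ y ∧ (x = 0 ∨ y = 0) := by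
  simp [starGraph]

lemma scost_starGraph (r : ℕ) : scost (starGraph r) Finset.univ = r + uval r + 1 := by
  set L : Finset (Fin (r + 1)) := Finset.univ.erase 0
  have hL : L.card = r := by simp [L]
  have hunion : insert 0 L = Finset.univ := Finset.insert_erase (Finset.mem_univ 0)
  refine le_antisymm ?_ ?_
  · have hleaf : ∀ w ∈ L, (starGraph r).neighborSet w = {0} := fun w hw => by
      ext x
      have : w ≠ 0 := Finset.ne_of_mem_erase hw
      simp only [SimpleGraph.mem_neighborSet, starGraph_adj, this, false_or,
        Set.mem_singleton_iff, and_iff_right_iff_imp]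
      rintro rfl
      exact this
    have hout : {x | (starGraph r).Adj 0 x ∧ x ∉ L}.Subsingleton := by
      rintro x ⟨hx, hxL⟩
      obtain rfl : x = 0 := by simpa [L] using hxL
      exact absurd hx (SimpleGraph.irrefl _)
    have := scost_le_stemBound hleaf hout Finset.univ
    simpa [stemBound, stemPotential, outerNbrs, hunion, hL, add_assoc] using this
  · have := card_add_uval_add_one_le_scost_insert (G := starGraph r)
      (Finset.notMem_erase 0 Finset.univ)
      (fun x hx => starGraph_adj.2 ⟨(Finset.ne_of_mem_erase hx).symm, .inl rfl⟩)
      (fun x hx y hy _ h => by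
        simp only [Finset.coe_erase, Set.mem_sdiff, Set.mem_singleton_iff] at hx hy
        exact (starGraph_adj.1 h).2.elim hx.2 hy.2)
    rwa [hunion, hL] at this

lemma IsStem.subsingleton_adj_notMem {α : Type} [Finite α] {G : SimpleGraph α} {v : α}
    {R : Finset α} (hv : IsStem G v) (hR : ∀ w, w ∈ R ↔ (G.Adj v w ∧ IsLeaf G w)) :
    {x | G.Adj v x ∧ x ∉ R}.Subsingleton := by
  have hset : {x | G.Adj v x ∧ x ∉ R} = {w | G.Adj v w ∧ ¬ IsLeaf G w} := by
    ext x
    simp only [Set.mem_ofPred_eq, hR]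
    tauto
  exact hset ▸ Set.ncard_le_one_iff_subsingleton.1 hv.2

section StemSplitting

variable {G : SimpleGraph V} {v : V} {R S : Finset V}

lemma scost_le_scost_sdiff_add_of_stem (hleaf : ∀ w ∈ R, G.neighborSet w = {v})
    (hout : {x | G.Adj v x ∧ x ∉ R}.Subsingleton) (htri : ¬ IsTriangular (R.card + 1))
    (hS : insert v R ⊆ S) :
    scost G S ≤ scost G (S \ insert v R) + (R.card + uval R.card + 1) := by
  have hupper := scost_le_stemBound hleaf hout S
  have ho := card_outerNbrs_le_one hout S
  have hu : uval (R.card + (outerNbrs G v R S).card) = uval R.card := by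
    interval_cases (outerNbrs G v R S).card
    exacts [rfl, uval_succ_of_not_isTriangular htri]
  rw [stemBound, stemPotential, Finset.inter_eq_right.2 ((Finset.subset_insert v R).trans hS),
    if_pos (hS (Finset.mem_insert_self v R)), hu] at hupper
  omega

lemma scost_sdiff_add_le_of_stem (hleaf : ∀ w ∈ R, G.neighborSet w = {v})
    (hS : insert v R ⊆ S) :
    scost G (S \ insert v R) + (R.card + uval R.card + 1) ≤ scost G S := by
  have hvR := notMem_of_forall_neighborSet_eq hleaf
  have hstar := card_add_uval_add_one_le_scost_insert hvR
    (fun x hx => G.adj_symm (((hleaf x hx).symm ▸ rfl : v ∈ G.neighborSet x)))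
    (fun x hx y hy _ hxy => hvR (((hleaf x hx).subset hxy : y = v) ▸ hy))
  have hsplit := scost_add_scost_le_scost_union (G := G)
    (Finset.sdiff_disjoint (s := insert v R) (t := S))
  rw [Finset.sdiff_union_of_subset hS] at hsplit
  omega

end StemSplitting

theorem stmt7_general (G : SimpleGraph V) (v : V) (R : Finset V)
    (hv : IsStem G v) (hR : ∀ w, w ∈ R ↔ (G.Adj v w ∧ IsLeaf G w))
    (htri : ¬ IsTriangular (R.card + 1)) :
    scost G Finset.univ =
      scost G (Finset.univ \ insert v R) + scost (starGraph R.card) Finset.univ := by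
  have hleaf : ∀ w ∈ R, G.neighborSet w = {v} := fun w hw =>
    neighborSet_eq_singleton_of_isLeaf ((hR w).1 hw).2 ((hR w).1 hw).1.symm
  rw [scost_starGraph]
  exact le_antisymm
    (scost_le_scost_sdiff_add_of_stem hleaf (hv.subsingleton_adj_notMem hR) htri (Finset.subset_univ _))
    (scost_sdiff_add_le_of_stem hleaf (Finset.subset_univ _))

/-- If `v` is a stem in a forest `T` with `r ≥ 1` leaf neighbors (forming the set `R`),
and `r + 1` is not triangular, then `s̊(T) = s̊(T - R - v) + s̊(K_{1,r})`. -/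
theorem stmt7 (G : SimpleGraph V) (hG : G.IsAcyclic) (v : V) (R : Finset V)
    (hv : IsStem G v) (hR : ∀ w, w ∈ R ↔ (G.Adj v w ∧ IsLeaf G w)) (hr : 1 ≤ R.card)
    (htri : ¬ IsTriangular (R.card + 1)) :
    scost G Finset.univ =
      scost G (Finset.univ \ insert v R) + scost (starGraph R.card) Finset.univ :=
  stmt7_general G v R hv hR htri
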